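/- Let δ ≥ 0 and let X be a geodesic metric space all of whose geodesic triangles are δ-thin. Let σ be the image of a geodesic segment in X, let a ∈ X, let c ∈ σ be a nearest point of σ to a (dist(a,c) ≤ dist(a,w) for all w ∈ σ), and let b ∈ σ. Then |dist(a,b) − (dist(a,c) + dist(c,b))| ≤ 8δ, and moreover for every geodesic segment g from a to b, the point c lies within distance 2δ of the image of g. -/

import Mathlib

/-!
Let `sbc ⊆ σ` be the subsegment from `b` to `c` and `sca` a geodesic from `c` to `a`. A point `p`
of `sca` with `dist p a + δ < dist c a` cannot be `δ`-close to `sbc`, because `c` is a nearest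
point of `σ` to `a`; by thinness of the triangle it is therefore `δ`-close to the side `ab`.
Letting `p` approach the point of `sca` at distance `δ` from `c`, and using compactness of `ab`,
gives a point of `ab` within `2δ` of `c`; the triangle inequality through that point then bounds
the defect `dist a c + dist c b - dist a b` by `4δ`.
-/

open Metric Set

/-- `s` is the image of a geodesic segment from `x` to `y`. -/
def IsGeodesicSegment {X : Type*} [MetricSpace X] (x y : X) (s : Set X) : Prop :=
  ∃ γ : ℝ → X, γ 0 = x ∧ γ (dist x y) = y ∧
    (∀ u ∈ Icc (0 : ℝ) (dist x y), ∀ v ∈ Icc (0 : ℝ) (dist x y),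
      dist (γ u) (γ v) = |u - v|) ∧
    s = γ '' Icc (0 : ℝ) (dist x y)

/-- A metric space is geodesic: any two points are joined by a geodesic segment. -/
def IsGeodesicMetricSpace (X : Type*) [MetricSpace X] : Prop :=
  ∀ x y : X, ∃ s : Set X, IsGeodesicSegment x y s

/-- All geodesic triangles of `X` are δ-thin: every point on any side lies within
distance δ of the union of the other two sides. -/
def ThinTriangles (X : Type*) [MetricSpace X] (δ : ℝ) : Prop :=
  ∀ a b c : X, ∀ sab sbc sca : Set X,
    IsGeodesicSegment a b sab → IsGeodesicSegment b c sbc →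
    IsGeodesicSegment c a sca →
    ∀ p ∈ sab, ∃ q ∈ sbc ∪ sca, dist p q ≤ δ

namespace IsGeodesicSegment

variable {X : Type*} [MetricSpace X] {x y : X} {s : Set X}

theorem of_image_Icc {γ : ℝ → X} {u v : ℝ} (huv : u ≤ v)
    (hγ : ∀ s ∈ Icc u v, ∀ t ∈ Icc u v, dist (γ s) (γ t) = |s - t|) :
    IsGeodesicSegment (γ u) (γ v) (γ '' Icc u v) := by
  have hlen : dist (γ u) (γ v) = v - u := by
    rw [hγ u ⟨le_rfl, huv⟩ v ⟨huv, le_rfl⟩, abs_sub_comm, abs_of_nonneg (sub_nonneg.2 huv)]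
  have hmem : ∀ w ∈ Icc (0 : ℝ) (v - u), u + w ∈ Icc u v := fun w hw =>
    ⟨by linarith [hw.1], by linarith [hw.2]⟩
  refine ⟨fun w => γ (u + w), by simp, by simp [hlen], ?_, ?_⟩
  · intro w hw z hz
    rw [hlen] at hw hz
    rw [hγ _ (hmem w hw) _ (hmem z hz), add_sub_add_left_eq_sub]
  · rw [hlen, ← image_image γ (u + ·), image_const_add_Icc, add_zero, add_sub_cancel]

theorem symm (h : IsGeodesicSegment x y s) : IsGeodesicSegment y x s := by
  obtain ⟨γ, rfl, hy, hγ, rfl⟩ := h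
  have hneg : ∀ w ∈ Icc (-dist (γ 0) y) 0, -w ∈ Icc 0 (dist (γ 0) y) := fun w hw =>
    ⟨by linarith [hw.2], by linarith [hw.1]⟩
  have := of_image_Icc (γ := fun w => γ (-w)) (neg_nonpos.2 dist_nonneg) fun w hw z hz => by
    rw [hγ _ (hneg w hw) _ (hneg z hz), ← abs_neg, neg_sub_neg, neg_sub]
  simp only [neg_neg, neg_zero, ← image_image γ Neg.neg, image_neg_Icc] at this
  rwa [hy] at this

theorem left_mem (h : IsGeodesicSegment x y s) : x ∈ s := by
  obtain ⟨γ, rfl, -, -, rfl⟩ := h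
  exact mem_image_of_mem γ ⟨le_rfl, dist_nonneg⟩

theorem isCompact (h : IsGeodesicSegment x y s) : IsCompact s := by
  obtain ⟨γ, -, -, hγ, rfl⟩ := h
  have : LipschitzOnWith 1 γ (Icc 0 (dist x y)) := .of_dist_le_mul fun u hu v hv => by
    rw [hγ u hu v hv, NNReal.coe_one, one_mul, Real.dist_eq]
  exact isCompact_Icc.image_of_continuousOn this.continuousOn

theorem exists_dist_eq (h : IsGeodesicSegment x y s) {t : ℝ} (ht : t ∈ Icc 0 (dist x y)) :
    ∃ p ∈ s, dist x p = t := by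
  obtain ⟨γ, hx, -, hγ, rfl⟩ := h
  refine ⟨γ t, mem_image_of_mem γ ht, ?_⟩
  rw [← hx, hγ 0 ⟨le_rfl, dist_nonneg⟩ t ht, zero_sub, abs_neg, abs_of_nonneg ht.1]

theorem dist_add_dist_eq (h : IsGeodesicSegment x y s) {p : X} (hp : p ∈ s) :
    dist x p + dist p y = dist x y := by
  obtain ⟨γ, hx, hy, hγ, rfl⟩ := h
  obtain ⟨t, ht, rfl⟩ := hp
  have hd : dist x y ∈ Icc 0 (dist x y) := ⟨dist_nonneg, le_rfl⟩
  conv_lhs => rw [← hx, ← hy]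
  rw [hγ 0 ⟨le_rfl, dist_nonneg⟩ t ht, hγ t ht _ hd, abs_of_nonpos (by linarith [ht.1]),
    abs_of_nonpos (by linarith [ht.2])]
  ring

theorem exists_subset (h : IsGeodesicSegment x y s) {p q : X} (hp : p ∈ s) (hq : q ∈ s) :
    ∃ s' ⊆ s, IsGeodesicSegment p q s' := by
  obtain ⟨γ, -, -, hγ, rfl⟩ := h
  have ordered : ∀ u ∈ Icc 0 (dist x y), ∀ v ∈ Icc 0 (dist x y), u ≤ v →
      ∃ s' ⊆ γ '' Icc 0 (dist x y), IsGeodesicSegment (γ u) (γ v) s' := fun u hu v hv huv =>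
    have hsub : Icc u v ⊆ Icc 0 (dist x y) := Icc_subset_Icc hu.1 hv.2
    ⟨γ '' Icc u v, image_mono hsub,
      of_image_Icc huv fun s hs t ht => hγ s (hsub hs) t (hsub ht)⟩
  obtain ⟨u, hu, rfl⟩ := hp
  obtain ⟨v, hv, rfl⟩ := hq
  rcases le_total u v with huv | hvu
  · exact ordered u hu v hv huv
  · obtain ⟨s', hs', hseg⟩ := ordered v hv u hu hvu
    exact ⟨s', hs', hseg.symm⟩

theorem abs_dist_sub_dist_add_dist_le (h : IsGeodesicSegment x y s) {w : X} (hw : w ∈ s) (z : X) :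
    |dist x y - (dist x z + dist z y)| ≤ 2 * dist z w := by
  have hsplit := h.dist_add_dist_eq hw
  rw [abs_le]
  constructor <;>
    linarith [dist_triangle x w z, dist_triangle z w y, dist_triangle x z y, dist_comm z w]

end IsGeodesicSegment

namespace ThinTriangles

variable {X : Type*} [MetricSpace X] {δ : ℝ} {a b c : X} {sab sbc sca : Set X}

theorem exists_mem_dist_le_of_nearest (hthin : ThinTriangles X δ)
    (hab : IsGeodesicSegment a b sab) (hbc : IsGeodesicSegment b c sbc)
    (hca : IsGeodesicSegment c a sca) (hnear : ∀ w ∈ sbc, dist a c ≤ dist a w)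
    {p : X} (hp : p ∈ sca) (hpa : dist p a + δ < dist c a) :
    ∃ q ∈ sab, dist p q ≤ δ := by
  obtain ⟨q, hq | hq, hpq⟩ := hthin c a b sca sab sbc hca hab hbc p hp
  · exact ⟨q, hq, hpq⟩
  · have := hnear q hq
    linarith [dist_triangle a p q, dist_comm a p, dist_comm a c]

theorem exists_mem_dist_le_two_mul_of_nearest (hthin : ThinTriangles X δ) (hδ : 0 ≤ δ)
    (hab : IsGeodesicSegment a b sab) (hbc : IsGeodesicSegment b c sbc)
    (hca : IsGeodesicSegment c a sca) (hnear : ∀ w ∈ sbc, dist a c ≤ dist a w) :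
    ∃ w ∈ sab, dist c w ≤ 2 * δ := by
  rcases le_or_gt (dist c a) (2 * δ) with hca_short | hca_long
  · exact ⟨a, hab.left_mem, hca_short⟩
  have hinf : infDist c sab ≤ 2 * δ := by
    refine le_of_forall_gt_imp_ge_of_dense fun r hr => ?_
    set t := min (r - δ) (dist c a)
    have htδ : δ < t := lt_min (by linarith) (by linarith)
    obtain ⟨p, hp, hcp⟩ := hca.exists_dist_eq ⟨by linarith, min_le_right _ _⟩
    have hpa : dist p a = dist c a - t := by linarith [hca.dist_add_dist_eq hp]
    obtain ⟨q, hq, hpq⟩ := hthin.exists_mem_dist_le_of_nearest hab hbc hca hnear hp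
      (by linarith)
    calc infDist c sab ≤ dist c q := infDist_le_dist_of_mem hq
      _ ≤ dist c p + dist p q := dist_triangle c p q
      _ ≤ r := by linarith [min_le_left (r - δ) (dist c a)]
  obtain ⟨w, hw, hcw⟩ := hab.isCompact.exists_infDist_eq_dist ⟨a, hab.left_mem⟩ c
  exact ⟨w, hw, hcw ▸ hinf⟩

end ThinTriangles

theorem stmt_12
    {X : Type*} [MetricSpace X] (δ : ℝ) (hδ : 0 ≤ δ)
    (hgeo : IsGeodesicMetricSpace X) (hthin : ThinTriangles X δ)
    (σ : Set X) (e₁ e₂ : X) (hσ : IsGeodesicSegment e₁ e₂ σ)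
    (a : X) (c : X) (hcσ : c ∈ σ) (hcnear : ∀ w ∈ σ, dist a c ≤ dist a w)
    (b : X) (hb : b ∈ σ) :
    |dist a b - (dist a c + dist c b)| ≤ 8 * δ ∧
      ∀ g : Set X, IsGeodesicSegment a b g → ∃ w ∈ g, dist c w ≤ 2 * δ := by
  obtain ⟨sbc, hsbc, hbc⟩ := hσ.exists_subset hb hcσ
  obtain ⟨sca, hca⟩ := hgeo c a
  have near : ∀ g : Set X, IsGeodesicSegment a b g → ∃ w ∈ g, dist c w ≤ 2 * δ :=
    fun g hab => hthin.exists_mem_dist_le_two_mul_of_nearest hδ hab hbc hca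
      fun w hw => hcnear w (hsbc hw)
  refine ⟨?_, near⟩
  obtain ⟨g, hab⟩ := hgeo a b
  obtain ⟨w, hw, hcw⟩ := near g hab
  linarith [hab.abs_dist_sub_dist_add_dist_le hw c]
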